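/- arXiv:1606.08325 — 2 statements merged into one kernel-verified Lean document; each statement's English description precedes it below -/
import Mathlib

section
/- Let n ∈ ℕ, r ∈ ℕ with r ≥ 1, let f₁,…,f_r and g be real-valued functions on ℝ, each n times differentiable, and let c = (c₁,…,c_r) ∈ ℝ^r with c₁+⋯+c_r = 0. Then for every multi-index s = (s₁,…,s_r) of nonnegative integers with s₁+⋯+s_r < n, one has Σ_{k₁+⋯+k_r = n} (n!/(k₁!⋯k_r!)) · Π_{i=1}^r c_i^{k_i} · (f_i · g^{k_i})^{(s_i)} = 0. -/
/-!
Induction on `∑ sᵢ`. For `s = 0` the multinomial theorem turns the sum into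
`(∏ fᵢ(x)) · (∑ cᵢ g(x))ⁿ = 0`. Otherwise lower some `s_{i₀} = p + 1` by one using
`(f gᵐ)' = f' gᵐ + m (f g') gᵐ⁻¹`: the sum splits into a sum of the same shape with `f_{i₀}`
replaced by `f_{i₀}'`, plus, after absorbing the factor `k_{i₀}` into the multinomial coefficient,
`n c_{i₀}` times a sum of the same shape of order `n - 1` with `f_{i₀}` replaced by `f_{i₀} g'`.
Both vanish by induction.
-/

open Finset

section Multinomial

variable {ι R : Type*} [Fintype ι] [DecidableEq ι] [CommSemiring R]

theorem Nat.succ_mul_multinomial_add_single (k : ι → ℕ) (i : ι) :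
    (k i + 1) * Nat.multinomial univ (k + Pi.single i 1) =
      (∑ j, k j + 1) * Nat.multinomial univ k := by
  have hi : i ∉ univ.erase i := notMem_erase i univ
  have hrest : Nat.multinomial (univ.erase i) (k + Pi.single i 1) =
      Nat.multinomial (univ.erase i) k :=
    Nat.multinomial_congr fun j hj => by simp [ne_of_mem_erase hj]
  have hsum : ∑ j ∈ univ.erase i, (k + Pi.single i 1 : ι → ℕ) j = ∑ j ∈ univ.erase i, k j :=
    sum_congr rfl fun j hj => by simp [ne_of_mem_erase hj]
  rw [← insert_erase (mem_univ i), Nat.multinomial_insert hi, Nat.multinomial_insert hi,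
    sum_insert hi, hrest, hsum]
  simp only [Pi.add_apply, Pi.single_eq_same]
  rw [← mul_assoc, ← mul_assoc, mul_comm (k i + 1), add_right_comm, ← Nat.add_one_mul_choose_eq]

theorem sum_multinomial_prod_pow_mul_mul_pow_eq_zero {c : ι → R} (hc : ∑ i, c i = 0)
    (a : ι → R) (b : R) {n : ℕ} (hn : n ≠ 0) :
    ∑ k ∈ piAntidiag univ n, Nat.multinomial univ k * ∏ i, c i ^ k i * (a i * b ^ k i) = 0 :=
  calc _ = (∏ i, a i) * (∑ i, c i * b) ^ n := by
        rw [sum_pow_eq_sum_piAntidiag, mul_sum]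
        refine sum_congr rfl fun k _ => ?_
        rw [mul_left_comm, ← prod_mul_distrib]
        congr 1
        exact prod_congr rfl fun i _ => by rw [mul_pow]; ring
    _ = 0 := by rw [← sum_mul, hc, zero_mul, zero_pow hn, mul_zero]

theorem sum_piAntidiag_succ_natCast_mul (i : ι) (n : ℕ) (F : (ι → ℕ) → R) :
    ∑ k ∈ piAntidiag univ (n + 1), (k i : R) * F k =
      ∑ k ∈ piAntidiag univ n, ((k i : R) + 1) * F (k + Pi.single i 1) := by
  have hmaps : ∀ k ∈ piAntidiag univ n, k + Pi.single i 1 ∈ piAntidiag univ (n + 1) := by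
    intro k hk
    simp_all [sum_add_distrib]
  have hsub : ((piAntidiag univ n).image (· + Pi.single i 1)) ⊆ piAntidiag univ (n + 1) := by
    simpa [subset_iff] using hmaps
  rw [← sum_subset hsub, sum_image fun _ _ _ _ h => add_right_cancel h]
  · simp
  · intro k hk hk'
    suffices k i = 0 by simp [this]
    by_contra h
    have hcancel : k - Pi.single i 1 + Pi.single i 1 = k := by
      ext j
      rcases eq_or_ne j i with rfl | hj
      · simp only [Pi.add_apply, Pi.sub_apply, Pi.single_eq_same]
        omega
      · simp [hj]
    refine hk' (mem_image.2 ⟨k - Pi.single i 1, ?_, hcancel⟩)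
    have hsum := (mem_piAntidiag.1 hk).1
    rw [← hcancel] at hsum
    simp_all [sum_add_distrib]

theorem sum_piAntidiag_succ_natCast_mul_multinomial (i : ι) (n : ℕ) (F : (ι → ℕ) → R) :
    ∑ k ∈ piAntidiag univ (n + 1), (k i : R) * (Nat.multinomial univ k * F k) =
      (n + 1) * ∑ k ∈ piAntidiag univ n, Nat.multinomial univ k * F (k + Pi.single i 1) := by
  rw [sum_piAntidiag_succ_natCast_mul, mul_sum]
  refine sum_congr rfl fun k hk => ?_
  have h := Nat.succ_mul_multinomial_add_single k i
  rw [(mem_piAntidiag.1 hk).1] at h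
  rw [← mul_assoc, ← mul_assoc]
  congr 1
  exact_mod_cast congrArg (Nat.cast : ℕ → R) h

theorem sum_multinomial_prod_eq_add_of_apply_eq {φ ψ χ : ι → ℕ → R} {i₀ : ι} (a : R)
    (hψ : ∀ i ≠ i₀, ψ i = φ i) (hχ : ∀ i ≠ i₀, χ i = φ i)
    (h : ∀ m, φ i₀ m = ψ i₀ m + m * a * χ i₀ (m - 1)) (n : ℕ) :
    ∑ k ∈ piAntidiag univ (n + 1), Nat.multinomial univ k * ∏ i, φ i (k i) =
      ∑ k ∈ piAntidiag univ (n + 1), Nat.multinomial univ k * ∏ i, ψ i (k i) +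
        (n + 1) * a * ∑ k ∈ piAntidiag univ n, Nat.multinomial univ k * ∏ i, χ i (k i) := by
  have hsplit : ∀ (θ : ι → ℕ → R) (k : ι → ℕ), (∀ i ≠ i₀, θ i = φ i) →
      ∏ i, θ i (k i) = θ i₀ (k i₀) * ∏ i ∈ univ.erase i₀, φ i (k i) := fun θ k hθ => by
    rw [← mul_prod_erase _ _ (mem_univ i₀)]
    exact congrArg _ (prod_congr rfl fun i hi => by rw [hθ i (ne_of_mem_erase hi)])
  set P : (ι → ℕ) → R := fun k => ∏ i ∈ univ.erase i₀, φ i (k i)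
  have hP : ∀ k, P (k + Pi.single i₀ 1) = P k := fun k =>
    prod_congr rfl fun i hi => by simp [ne_of_mem_erase hi]
  calc ∑ k ∈ piAntidiag univ (n + 1), Nat.multinomial univ k * ∏ i, φ i (k i)
      = ∑ k ∈ piAntidiag univ (n + 1), (Nat.multinomial univ k * (ψ i₀ (k i₀) * P k) +
          k i₀ * (Nat.multinomial univ k * (a * χ i₀ (k i₀ - 1) * P k))) :=
        sum_congr rfl fun k _ => by rw [hsplit φ k fun _ _ => rfl, h]; ring
    _ = ∑ k ∈ piAntidiag univ (n + 1), Nat.multinomial univ k * ∏ i, ψ i (k i) +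
          (n + 1) * ∑ k ∈ piAntidiag univ n, Nat.multinomial univ k *
            (a * χ i₀ ((k + Pi.single i₀ 1 : ι → ℕ) i₀ - 1) * P (k + Pi.single i₀ 1)) := by
        rw [sum_add_distrib, sum_piAntidiag_succ_natCast_mul_multinomial]
        simp only [hsplit ψ _ hψ, P]
    _ = _ := by
        rw [mul_assoc]
        congr 2
        rw [mul_sum]
        refine sum_congr rfl fun k _ => ?_
        rw [hsplit χ k hχ, hP]
        simp only [Pi.add_apply, Pi.single_eq_same, add_tsub_cancel_right]
        ring

end Multinomial

section Derivatives

variable {𝕜 : Type*} [NontriviallyNormedField 𝕜]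

theorem iteratedDeriv_succ_mul_pow {p : ℕ} {f g : 𝕜 → 𝕜} (hf : ContDiff 𝕜 (p + 1) f)
    (hg : ContDiff 𝕜 (p + 1) g) (m : ℕ) (x : 𝕜) :
    iteratedDeriv (p + 1) (fun t => f t * g t ^ m) x =
      iteratedDeriv p (fun t => deriv f t * g t ^ m) x +
        m * iteratedDeriv p (fun t => f t * deriv g t * g t ^ (m - 1)) x := by
  have hderiv : deriv (fun t => f t * g t ^ m) =
      fun t => deriv f t * g t ^ m + m * (f t * deriv g t * g t ^ (m - 1)) := by
    funext t
    rw [((hf.differentiable (by simp) t).hasDerivAt.fun_mul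
      ((hg.differentiable (by simp) t).hasDerivAt.fun_pow m)).deriv]
    ring
  have hf' : ContDiff 𝕜 p (deriv f) := hf.deriv'
  have hg' : ContDiff 𝕜 p (deriv g) := hg.deriv'
  have hfp : ContDiff 𝕜 p f := hf.of_le (by simp)
  have hgp : ContDiff 𝕜 p g := hg.of_le (by simp)
  rw [iteratedDeriv_succ', hderiv, iteratedDeriv_fun_add
    (hf'.mul (hgp.pow m)).contDiffAt
    (contDiff_const.mul ((hfp.mul hg').mul (hgp.pow (m - 1)))).contDiffAt,
    iteratedDeriv_const_mul_field]

theorem sum_multinomial_prod_iteratedDeriv_mul_pow_eq_zero {ι : Type*} [Fintype ι]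
    [DecidableEq ι] {g : 𝕜 → 𝕜} {c : ι → 𝕜} (hc : ∑ i, c i = 0) (x : 𝕜) {f : ι → 𝕜 → 𝕜}
    {s : ι → ℕ} {n : ℕ} (hf : ∀ i, ContDiff 𝕜 (s i) (f i)) (hg : ContDiff 𝕜 (∑ i, s i : ℕ) g)
    (hs : ∑ i, s i < n) :
    ∑ k ∈ piAntidiag univ n, (Nat.multinomial univ k : 𝕜) *
      ∏ i, c i ^ k i * iteratedDeriv (s i) (fun t => f i t * g t ^ k i) x = 0 := by
  induction hM : ∑ i, s i generalizing f s n with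
  | zero =>
    have hs0 : ∀ i, s i = 0 := by simpa using hM
    simpa only [hs0, iteratedDeriv_zero] using
      sum_multinomial_prod_pow_mul_mul_pow_eq_zero hc (fun i => f i x) (g x) (by omega : n ≠ 0)
  | succ M ih =>
    rw [hM] at hg hs
    obtain ⟨i₀, -, hi₀⟩ := exists_ne_zero_of_sum_ne_zero (by omega : ∑ i, s i ≠ 0)
    obtain ⟨p, hp⟩ := Nat.exists_eq_add_one_of_ne_zero hi₀
    obtain ⟨N, rfl⟩ := Nat.exists_eq_add_one_of_ne_zero (by omega : n ≠ 0)
    have hfi₀ : ContDiff 𝕜 (p + 1) (f i₀) := by simpa [hp] using hf i₀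
    have hs_le : s i₀ ≤ ∑ i, s i := single_le_sum (fun i _ => (s i).zero_le) (mem_univ i₀)
    have hgp : ContDiff 𝕜 (p + 1) g := hg.of_le (by exact_mod_cast (by omega : p + 1 ≤ M + 1))
    have hgM : ContDiff 𝕜 M g := hg.of_le (by simp)
    have hs' : ∑ i, Function.update s i₀ p i = M := by
      have := add_sum_erase univ s (mem_univ i₀)
      rw [sum_update_of_mem (mem_univ i₀), sdiff_singleton_eq_erase]
      omega
    have hf_update : ∀ h : 𝕜 → 𝕜, ContDiff 𝕜 p h →
        ∀ i, ContDiff 𝕜 (Function.update s i₀ p i) (Function.update f i₀ h i) := by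
      intro h hh i
      rcases eq_or_ne i i₀ with rfl | hi
      · simpa using hh
      · simpa [hi] using hf i
    refine (sum_multinomial_prod_eq_add_of_apply_eq (i₀ := i₀) (c i₀)
      (φ := fun i m => c i ^ m * iteratedDeriv (s i) (fun t => f i t * g t ^ m) x)
      (ψ := fun i m => c i ^ m * iteratedDeriv (Function.update s i₀ p i)
        (fun t => Function.update f i₀ (deriv (f i₀)) i t * g t ^ m) x)
      (χ := fun i m => c i ^ m * iteratedDeriv (Function.update s i₀ p i)
        (fun t => Function.update f i₀ (fun t => f i₀ t * deriv g t) i t * g t ^ m) x)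
      ?_ ?_ ?_ N).trans ?_
    · intro i hi
      simp [hi]
    · intro i hi
      simp [hi]
    · intro m
      simp only [Function.update_self, hp]
      rw [iteratedDeriv_succ_mul_pow hfi₀ hgp]
      rcases m with _ | m
      · simp
      · simp only [add_tsub_cancel_right, pow_succ]
        ring
    · rw [ih (hf_update _ hfi₀.deriv') (by simpa [hs'] using hgM) (by omega) hs',
        ih (hf_update _ (hfi₀.of_le (by simp) |>.mul hgp.deriv')) (by simpa [hs'] using hgM)
          (by omega) hs', mul_zero, add_zero]

end Derivatives

theorem stmt_3_general (n r : ℕ)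
    (f : Fin r → ℝ → ℝ) (g : ℝ → ℝ)
    (hf : ∀ i, ContDiff ℝ (n : ℕ∞) (f i))
    (hg : ContDiff ℝ (n : ℕ∞) g)
    (c : Fin r → ℝ) (hc : ∑ i, c i = 0)
    (s : Fin r → ℕ) (hs : ∑ i, s i < n) (x : ℝ) :
    ∑ k ∈ Finset.Nat.antidiagonalTuple r n,
      (Nat.multinomial Finset.univ k : ℝ) *
        ∏ i, (c i) ^ (k i) * iteratedDeriv (s i) (fun t => f i t * (g t) ^ (k i)) x
      = 0 := by
  have hsi : ∀ i, s i ≤ n := fun i =>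
    (single_le_sum (fun j _ => (s j).zero_le) (mem_univ i)).trans hs.le
  rw [← piAntidiag_univ_fin_eq_antidiagonalTuple]
  exact sum_multinomial_prod_iteratedDeriv_mul_pow_eq_zero hc x
    (fun i => (hf i).of_le (by exact_mod_cast hsi i)) (hg.of_le (by exact_mod_cast hs.le)) hs

theorem stmt_3 (n r : ℕ) (hr : 1 ≤ r)
    (f : Fin r → ℝ → ℝ) (g : ℝ → ℝ)
    (hf : ∀ i, ContDiff ℝ (n : ℕ∞) (f i))
    (hg : ContDiff ℝ (n : ℕ∞) g)
    (c : Fin r → ℝ) (hc : ∑ i, c i = 0)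
    (s : Fin r → ℕ) (hs : ∑ i, s i < n) (x : ℝ) :
    ∑ k ∈ Finset.Nat.antidiagonalTuple r n,
      (Nat.multinomial Finset.univ k : ℝ) *
        ∏ i, (c i) ^ (k i) * iteratedDeriv (s i) (fun t => f i t * (g t) ^ (k i)) x
      = 0 :=
  stmt_3_general n r f g hf hg c hc s hs x
end

section
/- Let n ∈ ℕ and let f₁, f₂, g be real-valued functions on ℝ, each n times differentiable. Then for all nonnegative integers s₁, s₂ with s₁ + s₂ = n, Σ_{k=0}^{n} (-1)^k · C(n,k) · (f₁ · g^k)^{(s₁)} · (f₂ · g^{n-k})^{(s₂)} = (-1)^{s₁} · n! · f₁ · f₂ · (g')^n, where C(n,k) is the binomial coefficient and h^{(m)} denotes the m-th derivative of h. -/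
/-!
Write `c = g x`. For each `t`, expanding `(g u - g t) ^ n` binomially either in `g t`, `g u` or
in `c - g t`, `g u - c` shows, by linearity of iterated derivatives, that the sum and
`∑ₖ C(n,k) (f₂ (g - c) ^ (n - k))^(s₂)(x) · (f₁ (c - g) ^ k)^(s₁)(x)` are both the
`s₁`-th derivative at `x` of `t ↦ f₁ t · (u ↦ f₂ u (g u - g t) ^ n)^(s₂)(x)`.
Since `g - c` vanishes at `x`, `(f (g - c) ^ j)^(m)(x)` is `0` for `m < j` and
`m! f(x) g'(x) ^ m` for `m = j`, so only the term `k = s₁` of the second sum survives.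
-/

open Finset

variable {𝕜 : Type*} [NontriviallyNormedField 𝕜] {f h : 𝕜 → 𝕜} {m : ℕ} {x : 𝕜}

theorem iteratedDeriv_mul_sum_const_mul {ι : Type*} (s : Finset ι) (a : ι → 𝕜)
    {G : ι → 𝕜 → 𝕜} (hf : ContDiff 𝕜 m f) (hG : ∀ i ∈ s, ContDiff 𝕜 m (G i)) :
    iteratedDeriv m (fun t => f t * ∑ i ∈ s, a i * G i t) x =
      ∑ i ∈ s, a i * iteratedDeriv m (fun t => f t * G i t) x := by
  simp_rw [mul_sum, mul_left_comm (f _)]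
  rw [iteratedDeriv_fun_sum fun i hi => contDiffAt_const.mul (hf.mul (hG i hi)).contDiffAt]
  simp only [iteratedDeriv_const_mul_field]

theorem iteratedDeriv_mul_add_pow (hf : ContDiff 𝕜 m f) (hh : ContDiff 𝕜 m h) (a : 𝕜) (n : ℕ) :
    iteratedDeriv m (fun t => f t * (a + h t) ^ n) x =
      ∑ k ∈ range (n + 1), a ^ k * n.choose k * iteratedDeriv m (fun t => f t * h t ^ (n - k)) x := by
  have hexpand : (fun t => f t * (a + h t) ^ n) =
      fun t => f t * ∑ k ∈ range (n + 1), (a ^ k * n.choose k) * h t ^ (n - k) := by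
    funext t
    rw [add_pow]
    exact congrArg (f t * ·) (sum_congr rfl fun k _ => by ring)
  rw [hexpand, iteratedDeriv_mul_sum_const_mul _ _ hf fun k _ => hh.pow _]

theorem deriv_mul_pow_succ (hf : Differentiable 𝕜 f) (hh : Differentiable 𝕜 h) (j : ℕ) :
    deriv (fun t => f t * h t ^ (j + 1)) =
      fun t => (deriv f t * h t + (j + 1) * f t * deriv h t) * h t ^ j := by
  funext t
  rw [deriv_fun_mul (hf t) ((hh t).fun_pow _), deriv_fun_pow (hh t), Nat.add_sub_cancel]
  push_cast
  ring

theorem iteratedDeriv_succ_mul_pow_succ (hf : ContDiff 𝕜 (m + 1) f) (hh : ContDiff 𝕜 (m + 1) h)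
    (j : ℕ) :
    ContDiff 𝕜 m (fun t => deriv f t * h t + (j + 1) * f t * deriv h t) ∧
      iteratedDeriv (m + 1) (fun t => f t * h t ^ (j + 1)) =
        iteratedDeriv m (fun t => (deriv f t * h t + (j + 1) * f t * deriv h t) * h t ^ j) := by
  obtain ⟨hf_diff, -, hf'⟩ := contDiff_succ_iff_deriv.mp hf
  obtain ⟨hh_diff, -, hh'⟩ := contDiff_succ_iff_deriv.mp hh
  refine ⟨(hf'.mul hh.of_succ).add ((contDiff_const.mul hf.of_succ).mul hh'), ?_⟩
  rw [iteratedDeriv_succ', deriv_mul_pow_succ hf_diff hh_diff]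

theorem iteratedDeriv_mul_pow_eq_zero_of_lt {j : ℕ} (hf : ContDiff 𝕜 m f) (hh : ContDiff 𝕜 m h)
    (hx : h x = 0) (hmj : m < j) : iteratedDeriv m (fun t => f t * h t ^ j) x = 0 := by
  induction m generalizing f j with
  | zero => simp [hx, zero_pow hmj.ne']
  | succ m ih =>
    obtain ⟨j, rfl⟩ := Nat.exists_eq_succ_of_ne_zero (by omega : j ≠ 0)
    obtain ⟨hF, hrw⟩ := iteratedDeriv_succ_mul_pow_succ hf hh j
    rw [hrw]
    exact ih hF hh.of_succ (by omega)

theorem iteratedDeriv_mul_pow_self (hf : ContDiff 𝕜 m f) (hh : ContDiff 𝕜 m h) (hx : h x = 0) :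
    iteratedDeriv m (fun t => f t * h t ^ m) x = m.factorial * f x * deriv h x ^ m := by
  induction m generalizing f with
  | zero => simp
  | succ m ih =>
    obtain ⟨hF, hrw⟩ := iteratedDeriv_succ_mul_pow_succ hf hh m
    rw [hrw, ih hF hh.of_succ, hx, Nat.factorial_succ]
    push_cast
    ring

theorem sum_choose_iteratedDeriv_mul_pow_recenter {f₁ f₂ g : 𝕜 → 𝕜} {s₁ s₂ : ℕ}
    (hf₁ : ContDiff 𝕜 s₁ f₁) (hf₂ : ContDiff 𝕜 s₂ f₂) (hg₁ : ContDiff 𝕜 s₁ g)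
    (hg₂ : ContDiff 𝕜 s₂ g) (n : ℕ) (c : 𝕜) :
    ∑ k ∈ range (n + 1), (-1) ^ k * n.choose k *
        iteratedDeriv s₁ (fun t => f₁ t * g t ^ k) x *
        iteratedDeriv s₂ (fun u => f₂ u * g u ^ (n - k)) x =
      ∑ k ∈ range (n + 1), n.choose k *
        iteratedDeriv s₂ (fun u => f₂ u * (g u - c) ^ (n - k)) x *
        iteratedDeriv s₁ (fun t => f₁ t * (c - g t) ^ k) x := by
  set a : ℕ → 𝕜 := fun k => (-1) ^ k * n.choose k *
    iteratedDeriv s₂ (fun u => f₂ u * g u ^ (n - k)) x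
  set b : ℕ → 𝕜 := fun k => n.choose k * iteratedDeriv s₂ (fun u => f₂ u * (g u - c) ^ (n - k)) x
  have hrecenter : ∀ t, ∑ k ∈ range (n + 1), a k * g t ^ k =
      ∑ k ∈ range (n + 1), b k * (c - g t) ^ k := by
    intro t
    calc ∑ k ∈ range (n + 1), a k * g t ^ k
        = iteratedDeriv s₂ (fun u => f₂ u * (-g t + g u) ^ n) x := by
          rw [iteratedDeriv_mul_add_pow hf₂ hg₂]
          exact sum_congr rfl fun k _ => by rw [neg_pow]; ring
      _ = iteratedDeriv s₂ (fun u => f₂ u * ((c - g t) + (g u - c)) ^ n) x := by ring_nf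
      _ = ∑ k ∈ range (n + 1), b k * (c - g t) ^ k := by
          rw [iteratedDeriv_mul_add_pow hf₂ (hg₂.sub contDiff_const)]
          exact sum_congr rfl fun k _ => by ring
  calc _ = ∑ k ∈ range (n + 1), a k * iteratedDeriv s₁ (fun t => f₁ t * g t ^ k) x :=
        sum_congr rfl fun k _ => by ring
    _ = iteratedDeriv s₁ (fun t => f₁ t * ∑ k ∈ range (n + 1), a k * g t ^ k) x := by
        rw [iteratedDeriv_mul_sum_const_mul _ _ hf₁ fun k _ => hg₁.pow k]
    _ = ∑ k ∈ range (n + 1), b k * iteratedDeriv s₁ (fun t => f₁ t * (c - g t) ^ k) x := by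
        simp_rw [hrecenter]
        rw [iteratedDeriv_mul_sum_const_mul _ _ hf₁ fun k _ => (contDiff_const.sub hg₁).pow k]

theorem stmt_4 (n : ℕ) (f₁ f₂ g : ℝ → ℝ)
    (hf₁ : ContDiff ℝ (n : ℕ∞) f₁) (hf₂ : ContDiff ℝ (n : ℕ∞) f₂)
    (hg : ContDiff ℝ (n : ℕ∞) g)
    (s₁ s₂ : ℕ) (hs : s₁ + s₂ = n) (x : ℝ) :
    ∑ k ∈ Finset.range (n + 1),
      (-1 : ℝ) ^ k * (n.choose k : ℝ) *
        iteratedDeriv s₁ (fun t => f₁ t * (g t) ^ k) x *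
        iteratedDeriv s₂ (fun t => f₂ t * (g t) ^ (n - k)) x
      = (-1 : ℝ) ^ s₁ * (n.factorial : ℝ) * f₁ x * f₂ x * (deriv g x) ^ n := by
  have hs₁ : s₁ ≤ n := by omega
  have hs₂ : s₂ ≤ n := by omega
  have hf₁' : ContDiff ℝ s₁ f₁ := hf₁.of_le (by exact_mod_cast hs₁)
  have hf₂' : ContDiff ℝ s₂ f₂ := hf₂.of_le (by exact_mod_cast hs₂)
  have hg₁ : ContDiff ℝ s₁ g := hg.of_le (by exact_mod_cast hs₁)
  have hg₂ : ContDiff ℝ s₂ g := hg.of_le (by exact_mod_cast hs₂)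
  set c := g x
  have hright : ContDiff ℝ s₂ (fun u => g u - c) := hg₂.sub contDiff_const
  have hleft : ContDiff ℝ s₁ (fun t => c - g t) := contDiff_const.sub hg₁
  rw [sum_choose_iteratedDeriv_mul_pow_recenter hf₁' hf₂' hg₁ hg₂ n c,
    sum_eq_single_of_mem s₁ (mem_range.mpr (Nat.lt_succ_of_le hs₁)) fun k _ hks₁ => ?vanish,
    show n - s₁ = s₂ by omega, iteratedDeriv_mul_pow_self hf₂' hright (sub_self c),
    iteratedDeriv_mul_pow_self hf₁' hleft (sub_self c), deriv_sub_const, deriv_const_sub,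
    ← Nat.choose_mul_factorial_mul_factorial hs₁, show n - s₁ = s₂ by omega, ← hs]
  case vanish =>
    rcases lt_or_gt_of_ne hks₁ with hlt | hgt
    · rw [iteratedDeriv_mul_pow_eq_zero_of_lt hf₂' hright (sub_self c) (by omega), mul_zero,
        zero_mul]
    · rw [iteratedDeriv_mul_pow_eq_zero_of_lt hf₁' hleft (sub_self c) hgt, mul_zero]
  push_cast
  ring
end
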